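/- The 8×8 matrix U (built from the idempotent matrices M and I-M on Q_4 by swapping the two copies of P = Im(M)) is symplectic with respect to the symplectic form H⊕H⊕H⊕H, where H = ((0,1),(-1,0)): that is, U^T · (H⊕H⊕H⊕H) · U = H⊕H⊕H⊕H, over the ring R = k[x_1,x_2,y_1,y_2,z]/(x_1y_1+x_2y_2-z(1-z)). -/
import Mathlib


set_option synthInstance.maxHeartbeats 1000000
set_option maxHeartbeats 4000000

open MvPolynomial

/-- `R = k[x₁,x₂,y₁,y₂,z]/(x₁y₁ + x₂y₂ - z(1-z))`, the coordinate ring of `Q₄`. -/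
abbrev Q4Ring (k : Type*) [CommRing k] : Type _ :=
  MvPolynomial (Fin 5) k ⧸
    Ideal.span {(X 0 * X 2 + X 1 * X 3 - X 4 * (1 - X 4) : MvPolynomial (Fin 5) k)}

noncomputable def x1 {k : Type*} [CommRing k] : Q4Ring k := Ideal.Quotient.mk _ (X 0)
noncomputable def x2 {k : Type*} [CommRing k] : Q4Ring k := Ideal.Quotient.mk _ (X 1)
noncomputable def y1 {k : Type*} [CommRing k] : Q4Ring k := Ideal.Quotient.mk _ (X 2)
noncomputable def y2 {k : Type*} [CommRing k] : Q4Ring k := Ideal.Quotient.mk _ (X 3)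
noncomputable def z {k : Type*} [CommRing k] : Q4Ring k := Ideal.Quotient.mk _ (X 4)

/-- The explicit `8 × 8` matrix `U` obtained by swapping the two copies of `P = Im(M)`. -/
noncomputable def UMat (k : Type*) [CommRing k] : Matrix (Fin 8) (Fin 8) (Q4Ring k) :=
  !![1-z, 0, -x2, x1, z, 0, x2, -x1;
     0, 1-z, -y1, -y2, 0, z, y1, y2;
     -y2, -x1, z, 0, y2, x1, 1-z, 0;
     y1, -x2, 0, z, -y1, x2, 0, 1-z;
     z, 0, x2, -x1, 1-z, 0, -x2, x1;
     0, z, y1, y2, 0, 1-z, -y1, -y2;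
     y2, x1, 1-z, 0, -y2, -x1, z, 0;
     -y1, x2, 0, 1-z, y1, -x2, 0, z]

/-- The symplectic form `H ⊕ H ⊕ H ⊕ H` with `H = ((0,1),(-1,0))`. -/
noncomputable def HForm (k : Type*) [CommRing k] : Matrix (Fin 8) (Fin 8) (Q4Ring k) :=
  !![0, 1, 0, 0, 0, 0, 0, 0;
     -1, 0, 0, 0, 0, 0, 0, 0;
     0, 0, 0, 1, 0, 0, 0, 0;
     0, 0, -1, 0, 0, 0, 0, 0;
     0, 0, 0, 0, 0, 1, 0, 0;
     0, 0, 0, 0, -1, 0, 0, 0;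
     0, 0, 0, 0, 0, 0, 0, 1;
     0, 0, 0, 0, 0, 0, -1, 0]


@[simp] lemma cons_val_five' {α : Type*} {m : ℕ} (x : α) (u : Fin (m+5) → α) :
    Matrix.vecCons x u 5 = Matrix.vecHead (Matrix.vecTail (Matrix.vecTail (Matrix.vecTail (Matrix.vecTail u)))) := rfl
@[simp] lemma cons_val_six' {α : Type*} {m : ℕ} (x : α) (u : Fin (m+6) → α) :
    Matrix.vecCons x u 6 = Matrix.vecHead (Matrix.vecTail (Matrix.vecTail (Matrix.vecTail (Matrix.vecTail (Matrix.vecTail u))))) := rfl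
@[simp] lemma cons_val_seven' {α : Type*} {m : ℕ} (x : α) (u : Fin (m+7) → α) :
    Matrix.vecCons x u 7 = Matrix.vecHead (Matrix.vecTail (Matrix.vecTail (Matrix.vecTail (Matrix.vecTail (Matrix.vecTail (Matrix.vecTail u)))))) := rfl

lemma q4_rel (k : Type*) [CommRing k] : (x1*y1 + x2*y2 - z*(1-z) : Q4Ring k) = 0 := by
  have h : (Ideal.Quotient.mk (Ideal.span {(X 0 * X 2 + X 1 * X 3 - X 4 * (1 - X 4) : MvPolynomial (Fin 5) k)}) (X 0 * X 2 + X 1 * X 3 - X 4 * (1 - X 4))) = 0 :=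
    Ideal.Quotient.eq_zero_iff_mem.mpr (Ideal.subset_span rfl)
  calc (x1*y1 + x2*y2 - z*(1-z) : Q4Ring k)
      = Ideal.Quotient.mk _ (X 0 * X 2 + X 1 * X 3 - X 4 * (1 - X 4)) := by
        simp only [x1, x2, y1, y2, z, map_add, map_sub, map_mul, map_one]
    _ = 0 := h

/-- `U` is symplectic with respect to `H ⊕ H ⊕ H ⊕ H`. -/
theorem UMat_symplectic (k : Type*) [CommRing k] :
    (UMat k).transpose * HForm k * UMat k = HForm k := by
  ext i j
  fin_cases i <;> fin_cases j <;>
    simp [UMat, HForm, Matrix.mul_apply, Matrix.transpose_apply, Fin.sum_univ_eight,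
      Matrix.vecHead, Matrix.vecTail, Function.comp] <;>
    first
      | ring1
      | linear_combination q4_rel k
      | linear_combination (-1 : Q4Ring k) * q4_rel k
      | linear_combination (2 : Q4Ring k) * q4_rel k
      | linear_combination (-2 : Q4Ring k) * q4_rel k
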